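/- Let H = T_H ⋊ H₀ be split, h = t^λ h₀ ∈ H, and u ∈ H₀. Then u Base_H(h) u⁻¹ = Base_H(h) if and only if both (1) u commutes with h₀, and (2) λ - uλ ∈ Mod_H(h₀). -/
import Mathlib

/-- Euclidean n-space. -/
abbrev E (n : ℕ) := EuclideanSpace ℝ (Fin n)

/-- The translation `t^v : x ↦ x + v` as a Euclidean isometry. -/
noncomputable def tr {n : ℕ} (v : E n) : E n ≃ᵢ E n := IsometryEquiv.addRight v

/-- An orthogonal transformation (linear isometry) as a Euclidean isometry. -/
noncomputable def lin {n : ℕ} (g : E n ≃ₗᵢ[ℝ] E n) : E n ≃ᵢ E n := g.toIsometryEquiv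

/-- The isometry `t^v ∘ g : x ↦ g x + v`. -/
noncomputable def elt {n : ℕ} (v : E n) (g : E n ≃ₗᵢ[ℝ] E n) : E n ≃ᵢ E n :=
  (lin g).trans (tr v)

/-- The move-set of an isometry. -/
def movSet {n : ℕ} (g : E n ≃ᵢ E n) : Set (E n) := {y | ∃ x, g x = x + y}

/-- The mod-set of an isometry with respect to a translation module `L`. -/
def modSet {n : ℕ} (L : AddSubgroup (E n)) (g : E n ≃ᵢ E n) : Set (E n) :=
  {y | ∃ μ ∈ L, y = g μ - μ}

lemma elt_apply {n : ℕ} (v : E n) (g : E n ≃ₗᵢ[ℝ] E n) (x : E n) : elt v g x = g x + v := rfl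

lemma inv_apply' {n : ℕ} (u : E n ≃ₗᵢ[ℝ] E n) (x : E n) : u⁻¹ x = u.symm x := rfl

lemma mem_modSet {n : ℕ} (L : AddSubgroup (E n)) (h₀ : E n ≃ₗᵢ[ℝ] E n) (y : E n) :
    y ∈ modSet L (lin h₀) ↔ ∃ μ ∈ L, y = h₀ μ - μ := by
  simp [modSet, lin]

lemma conj_elt {n : ℕ} (u : E n ≃ₗᵢ[ℝ] E n) (v : E n) (g : E n ≃ₗᵢ[ℝ] E n) :
    lin u * elt v g * (lin u)⁻¹ = elt (u v) (u * g * u⁻¹) := by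
  have hinv : (lin u)⁻¹ = lin u⁻¹ := rfl
  ext x
  simp [hinv, elt, lin, tr, IsometryEquiv.mul_apply, map_add]
  rfl

lemma elt_inj {n : ℕ} {v v' : E n} {g g' : E n ≃ₗᵢ[ℝ] E n} (h : elt v g = elt v' g') :
    v = v' ∧ g = g' := by
  have h0 := congrArg (fun f => (f : E n ≃ᵢ E n) 0) h
  simp [elt_apply] at h0
  refine ⟨h0, LinearIsometryEquiv.ext fun x => ?_⟩
  have hx := congrArg (fun f => (f : E n ≃ᵢ E n) x) h
  simp [elt_apply, h0] at hx
  exact hx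

/-- `u Base_H(h) u⁻¹ = Base_H(h)` iff `u` commutes with `h₀` and `λ - uλ ∈ Mod_H(h₀)`. -/
theorem stmt13 {n : ℕ} (L : AddSubgroup (E n)) (H₀ : Subgroup (E n ≃ₗᵢ[ℝ] E n))
    (hL : ∀ u ∈ H₀, ∀ v ∈ L, u v ∈ L)
    (lam : E n) (h₀ : E n ≃ₗᵢ[ℝ] E n) (hlam : lam ∈ L) (hh₀ : h₀ ∈ H₀)
    (u : E n ≃ₗᵢ[ℝ] E n) (hu : u ∈ H₀) :
    ((fun b => lin u * b * (lin u)⁻¹) ''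
        {g | ∃ μ ∈ modSet L (lin h₀), g = elt (lam + μ) h₀}
      = {g | ∃ μ ∈ modSet L (lin h₀), g = elt (lam + μ) h₀})
    ↔ (u * h₀ = h₀ * u ∧ lam - u lam ∈ modSet L (lin h₀)) := by
  have h0mem : (0 : E n) ∈ modSet L (lin h₀) :=
    (mem_modSet L h₀ 0).2 ⟨0, L.zero_mem, by simp⟩
  have mod_neg : ∀ y ∈ modSet L (lin h₀), -y ∈ modSet L (lin h₀) := by
    intro y hy
    obtain ⟨ν, hν, rfl⟩ := (mem_modSet L h₀ y).1 hy
    exact (mem_modSet L h₀ _).2 ⟨-ν, L.neg_mem hν, by simp [map_neg]; abel⟩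
  have mod_add : ∀ y ∈ modSet L (lin h₀), ∀ z ∈ modSet L (lin h₀),
      y + z ∈ modSet L (lin h₀) := by
    intro y hy z hz
    obtain ⟨ν, hν, rfl⟩ := (mem_modSet L h₀ y).1 hy
    obtain ⟨ρ, hρ, rfl⟩ := (mem_modSet L h₀ z).1 hz
    exact (mem_modSet L h₀ _).2 ⟨ν + ρ, L.add_mem hν hρ, by simp [map_add]; abel⟩
  have mod_map : ∀ w ∈ H₀, w * h₀ = h₀ * w →
      ∀ y ∈ modSet L (lin h₀), w y ∈ modSet L (lin h₀) := by
    intro w hw hcomm y hy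
    obtain ⟨ν, hν, rfl⟩ := (mem_modSet L h₀ y).1 hy
    refine (mem_modSet L h₀ _).2 ⟨w ν, hL w hw ν hν, ?_⟩
    have hc : w (h₀ ν) = h₀ (w ν) := by
      have h : (w * h₀) ν = (h₀ * w) ν := by rw [hcomm]
      exact h
    simp [map_sub, hc]
  constructor
  · intro hEq
    have hmem : elt (lam + 0) h₀ ∈
        {g | ∃ μ ∈ modSet L (lin h₀), g = elt (lam + μ) h₀} := ⟨0, h0mem, rfl⟩
    have himg := hEq ▸ Set.mem_image_of_mem (fun b => lin u * b * (lin u)⁻¹) hmem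
    obtain ⟨μ', hμ', heq⟩ := himg
    rw [conj_elt] at heq
    obtain ⟨hv, hg⟩ := elt_inj heq
    have hcomm : u * h₀ = h₀ * u := mul_inv_eq_iff_eq_mul.mp hg
    refine ⟨hcomm, ?_⟩
    have hlam' : lam - u lam = -μ' := by
      rw [add_zero] at hv
      rw [hv]; abel
    rw [hlam']
    exact mod_neg _ hμ'
  · rintro ⟨hcomm, hmod⟩
    have huh : u * h₀ * u⁻¹ = h₀ := by
      rw [hcomm, mul_assoc, mul_inv_cancel, mul_one]
    have hcomm' : u⁻¹ * h₀ = h₀ * u⁻¹ := by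
      rw [eq_comm, mul_inv_eq_iff_eq_mul, mul_assoc, ← hcomm, ← mul_assoc,
        inv_mul_cancel, one_mul]
    have hulam : lam - u⁻¹ lam ∈ modSet L (lin h₀) := by
      have h1 : u⁻¹ (lam - u lam) ∈ modSet L (lin h₀) :=
        mod_map u⁻¹ (inv_mem hu) hcomm' _ hmod
      have he : u⁻¹ (lam - u lam) = u⁻¹ lam - lam := by
        simp [map_sub, inv_apply']
      rw [he] at h1
      have h2 := mod_neg _ h1
      simpa [neg_sub] using h2
    ext g
    constructor
    · rintro ⟨b, ⟨μ, hμ, rfl⟩, rfl⟩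
      refine ⟨u μ + (u lam - lam), ?_, ?_⟩
      · refine mod_add _ (mod_map u hu hcomm μ hμ) _ ?_
        have := mod_neg _ hmod
        simpa [neg_sub] using this
      · show lin u * elt (lam + μ) h₀ * (lin u)⁻¹ = _
        rw [conj_elt, huh]
        congr 1
        simp [map_add]; abel
    · rintro ⟨μ, hμ, rfl⟩
      refine ⟨elt (lam + (u⁻¹ μ + (u⁻¹ lam - lam))) h₀, ⟨_, ?_, rfl⟩, ?_⟩
      · refine mod_add _ (mod_map u⁻¹ (inv_mem hu) hcomm' μ hμ) _ ?_
        have := mod_neg _ hulam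
        simpa [neg_sub] using this
      · show lin u * elt (lam + (u⁻¹ μ + (u⁻¹ lam - lam))) h₀ * (lin u)⁻¹ = _
        rw [conj_elt, huh]
        congr 1
        simp [map_add, map_sub, inv_apply']
        abel
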